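/- arXiv:1104.5489 — 3 statements merged into one kernel-verified Lean document; each statement's English description precedes it below -/
import Mathlib

section
/- For any affine root a and any vector v̂ ∈ V̂, the integral-reflection operator satisfies the degenerate Hecke cross relation Q(s_a) ∘ ∂_{v̂} = ∂_{s_a v̂} ∘ Q(s_a) - (a, v̂) k_a · Id, where Q(s_a) = s_a - k_a I(a) and ∂_{v̂} is the directional derivative. -/
open scoped RealInnerProductSpace

/- V̂ = V ⊕ ℝc ⊕ ℝd modeled as `V × ℝ × ℝ`. -/

/-- The bilinear form on V̂ extending the inner product by (c,d)=1, (c,c)=(d,d)=0. -/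
noncomputable def BhatV {V : Type*} [NormedAddCommGroup V] [InnerProductSpace ℝ V]
    (p q : V × ℝ × ℝ) : ℝ :=
  ⟪p.1, q.1⟫ + p.2.1 * q.2.2 + p.2.2 * q.2.1

/-- Reflection s_a(v̂) = v̂ - (v̂, a∨)a, a∨ = (2/(a,a))a. -/
noncomputable def srefV {V : Type*} [NormedAddCommGroup V] [InnerProductSpace ℝ V]
    (a : V × ℝ × ℝ) (p : V × ℝ × ℝ) : V × ℝ × ℝ :=
  p - ((2 / BhatV a a) * BhatV p a) • a

/-- The operator Q(s_a) = s_a - k_a I(a). -/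
noncomputable def Qop {V : Type*} [NormedAddCommGroup V] [InnerProductSpace ℝ V]
    (a : V × ℝ × ℝ) (k : ℂ) (f : V × ℝ × ℝ → ℂ) (v : V × ℝ × ℝ) : ℂ :=
  f (srefV a v) - k * ∫ t in (0:ℝ)..(BhatV a v), f (v - t • ((2 / BhatV a a) • a))

/-- The directional derivative ∂_{v̂}. -/
noncomputable def Dop {V : Type*} [NormedAddCommGroup V] [InnerProductSpace ℝ V]
    (vhat : V × ℝ × ℝ) (f : V × ℝ × ℝ → ℂ) (u : V × ℝ × ℝ) : ℂ :=
  deriv (fun t : ℝ => f (u + t • vhat)) 0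

lemma BhatV_symm {V : Type*} [NormedAddCommGroup V] [InnerProductSpace ℝ V]
    (p q : V × ℝ × ℝ) : BhatV p q = BhatV q p := by
  simp only [BhatV, real_inner_comm p.1 q.1]; ring

lemma BhatV_add_right {V : Type*} [NormedAddCommGroup V] [InnerProductSpace ℝ V]
    (p q r : V × ℝ × ℝ) : BhatV p (q + r) = BhatV p q + BhatV p r := by
  simp only [BhatV, Prod.fst_add, Prod.snd_add, inner_add_right]; ring

lemma BhatV_sub_right {V : Type*} [NormedAddCommGroup V] [InnerProductSpace ℝ V]
    (p q r : V × ℝ × ℝ) : BhatV p (q - r) = BhatV p q - BhatV p r := by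
  simp only [BhatV, Prod.fst_sub, Prod.snd_sub, inner_sub_right]; ring

lemma BhatV_smul_right {V : Type*} [NormedAddCommGroup V] [InnerProductSpace ℝ V]
    (c : ℝ) (p q : V × ℝ × ℝ) : BhatV p (c • q) = c * BhatV p q := by
  simp only [BhatV, Prod.smul_fst, Prod.smul_snd, inner_smul_right, smul_eq_mul]; ring

lemma hasDerivAt_g_fst (g : ℝ × ℝ → ℂ) (hg : ContDiff ℝ (⊤ : ℕ∞) g) (x r : ℝ) :
    HasDerivAt (fun y => g (y, r)) (fderiv ℝ g (x, r) (1, 0)) x := by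
  have h1 : HasFDerivAt g (fderiv ℝ g (x, r)) (x, r) :=
    (hg.differentiable (by simp) (x, r)).hasFDerivAt
  have h2 : HasDerivAt (fun y : ℝ => ((y, r) : ℝ × ℝ)) ((1 : ℝ), (0 : ℝ)) x :=
    (hasDerivAt_id x).prodMk (hasDerivAt_const x r)
  exact h1.comp_hasDerivAt x h2


lemma key_deriv (g : ℝ × ℝ → ℂ) (hg : ContDiff ℝ (⊤ : ℕ∞) g) (β B : ℝ) :
    HasDerivAt (fun t => ∫ r in (t * β)..B, g (t, r))
      ((∫ r in (0:ℝ)..B, fderiv ℝ g (0, r) (1, 0)) - (β : ℂ) * g (0, 0)) 0 := by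
  have hgc : Continuous g := hg.continuous
  have hgr : ∀ t : ℝ, Continuous fun r => g (t, r) :=
    fun t => hgc.comp (Continuous.prodMk_right t)
  have contF' : Continuous fun p : ℝ × ℝ => fderiv ℝ g p (1, 0) :=
    (ContinuousLinearMap.apply ℝ ℂ ((1:ℝ), (0:ℝ))).continuous.comp
      (hg.continuous_fderiv (by simp))
  -- Part A : fixed endpoints, moving parameter
  obtain ⟨C, hC⟩ := ((isCompact_closedBall (0:ℝ) 1).prod (isCompact_uIcc (a := (0:ℝ)) (b := B))).exists_bound_of_continuousOn
      (f := fun p : ℝ × ℝ => fderiv ℝ g p (1, 0)) contF'.continuousOn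
  have hA : HasDerivAt (fun t => ∫ r in (0:ℝ)..B, g (t, r))
      (∫ r in (0:ℝ)..B, fderiv ℝ g (0, r) (1, 0)) 0 := by
    refine (intervalIntegral.hasDerivAt_integral_of_dominated_loc_of_deriv_le
      (F := fun t r => g (t, r)) (F' := fun t r => fderiv ℝ g (t, r) (1, 0))
      (bound := fun _ => C) (Metric.ball_mem_nhds (0:ℝ) one_pos) ?_ ?_ ?_ ?_ ?_ ?_).2
    · exact Filter.Eventually.of_forall fun t => (hgr t).aestronglyMeasurable
    · exact (hgr 0).intervalIntegrable _ _
    · exact (contF'.comp (Continuous.prodMk_right 0)).aestronglyMeasurable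
    · refine MeasureTheory.ae_of_all _ fun r hr t ht => ?_
      exact hC (t, r) (Set.mk_mem_prod (Metric.ball_subset_closedBall ht)
        (Set.uIoc_subset_uIcc hr))
    · exact intervalIntegrable_const
    · exact MeasureTheory.ae_of_all _ fun r _ t _ => hasDerivAt_g_fst g hg t r
  -- Part B1 : frozen parameter, moving endpoint
  have hΨ : HasDerivAt (fun x => ∫ r in (0:ℝ)..x, g (0, r)) (g (0, 0)) 0 :=
    intervalIntegral.integral_hasDerivAt_right ((hgr 0).intervalIntegrable _ _)
      ((hgr 0).stronglyMeasurableAtFilter _ _) (hgr 0).continuousAt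
  have hmul : HasDerivAt (fun t : ℝ => t * β) β 0 := by
    simpa using (hasDerivAt_id (0:ℝ)).mul_const β
  have hB1 : HasDerivAt (fun t : ℝ => ∫ r in (0:ℝ)..(t * β), g (0, r))
      ((β : ℂ) * g (0, 0)) 0 := by
    have := HasDerivAt.scomp_of_eq (x := (0:ℝ)) hΨ hmul (zero_mul β).symm
    simpa [Function.comp_def, Complex.real_smul] using this
  -- Part B2 : the error term is o(t)
  obtain ⟨K, s, hs, hlip⟩ := ((hg.of_le (mod_cast le_top) : ContDiff ℝ 1 g).contDiffAt
    (x := ((0:ℝ), (0:ℝ)))).exists_lipschitzOnWith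
  obtain ⟨ε, εpos, hεs⟩ := Metric.mem_nhds_iff.mp hs
  have habs : ∀ t r : ℝ, r ∈ Set.uIoc 0 (t * β) → |r| ≤ |t * β| := by
    intro t r hr
    rcases Set.mem_uIoc.mp hr with h | h
    · exact abs_le.mpr ⟨by nlinarith [abs_nonneg (t * β)], h.2.trans (le_abs_self _)⟩
    · exact abs_le.mpr ⟨(neg_abs_le (t * β)).trans h.1.le, by nlinarith [abs_nonneg (t * β)]⟩
  have hbnd : ∀ t : ℝ, |t| * (1 + |β|) < ε →
      ‖∫ r in (0:ℝ)..(t * β), (g (t, r) - g (0, r))‖ ≤ (↑K * |β|) * (|t| * |t|) := by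
    intro t ht
    have h1 : ∀ r ∈ Set.uIoc (0:ℝ) (t * β), ‖g (t, r) - g (0, r)‖ ≤ ↑K * |t| := by
      intro r hr
      have hrle : |r| ≤ |t * β| := habs t r hr
      have htβ : |t * β| ≤ |t| * (1 + |β|) := by
        rw [abs_mul]; nlinarith [abs_nonneg t, abs_nonneg β]
      have ht0 : |t| ≤ |t| * (1 + |β|) := by nlinarith [abs_nonneg t, abs_nonneg β]
      have hm1 : ((t, r) : ℝ × ℝ) ∈ Metric.ball ((0:ℝ), (0:ℝ)) ε := by
        simp only [Metric.mem_ball, Prod.dist_eq, Real.dist_eq, sub_zero]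
        exact max_lt (lt_of_le_of_lt ht0 ht) (lt_of_le_of_lt (hrle.trans htβ) ht)
      have hm2 : ((0, r) : ℝ × ℝ) ∈ Metric.ball ((0:ℝ), (0:ℝ)) ε := by
        simp only [Metric.mem_ball, Prod.dist_eq, Real.dist_eq, sub_zero]
        exact max_lt (by simpa using εpos) (lt_of_le_of_lt (hrle.trans htβ) ht)
      have := hlip.dist_le_mul ((t, r)) (hεs hm1) ((0, r)) (hεs hm2)
      have hdist : dist ((t, r) : ℝ × ℝ) ((0, r)) = |t| := by
        simp [Prod.dist_eq, Real.dist_eq]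
      rw [dist_eq_norm] at this
      rw [hdist] at this
      exact this
    have := intervalIntegral.norm_integral_le_of_norm_le_const h1
    rw [sub_zero] at this
    calc ‖∫ r in (0:ℝ)..(t * β), (g (t, r) - g (0, r))‖ ≤ ↑K * |t| * |t * β| := this
      _ = (↑K * |β|) * (|t| * |t|) := by rw [abs_mul]; ring
  have hB2 : HasDerivAt (fun t : ℝ => ∫ r in (0:ℝ)..(t * β), (g (t, r) - g (0, r)))
      (0 : ℂ) 0 := by
    rw [hasDerivAt_iff_isLittleO]
    simp only [zero_mul, intervalIntegral.integral_same, sub_zero, smul_zero]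
    rw [Asymptotics.isLittleO_iff]
    intro c hc
    have hδ : (0:ℝ) < min (ε / (1 + |β|)) (c / (↑K * |β| + 1)) := by
      apply lt_min
      · positivity
      · positivity
    rw [Metric.eventually_nhds_iff]
    refine ⟨_, hδ, fun {t} hdt => ?_⟩
    rw [Real.dist_eq, sub_zero] at hdt
    have h1 : |t| * (1 + |β|) < ε := by
      have := lt_of_lt_of_le hdt (min_le_left _ _)
      rw [lt_div_iff₀ (by positivity)] at this
      linarith
    have h2 : |t| < c / (↑K * |β| + 1) := lt_of_lt_of_le hdt (min_le_right _ _)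
    rw [lt_div_iff₀ (by positivity)] at h2
    calc ‖∫ r in (0:ℝ)..(t * β), (g (t, r) - g (0, r))‖
        ≤ (↑K * |β|) * (|t| * |t|) := hbnd t h1
      _ ≤ c * |t| := by nlinarith [abs_nonneg t, NNReal.coe_nonneg K, abs_nonneg β]
      _ = c * ‖t‖ := by rw [Real.norm_eq_abs]
  -- Combine B1 and B2
  have hB : HasDerivAt (fun t : ℝ => ∫ r in (0:ℝ)..(t * β), g (t, r))
      ((β : ℂ) * g (0, 0)) 0 := by
    have heq : (fun t : ℝ => ∫ r in (0:ℝ)..(t * β), g (t, r))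
        = fun t => (∫ r in (0:ℝ)..(t * β), (g (t, r) - g (0, r)))
            + ∫ r in (0:ℝ)..(t * β), g (0, r) := by
      funext t
      rw [← intervalIntegral.integral_add (f := fun r => g (t, r) - g (0, r)) (g := fun r => g (0, r)) (((hgr t).sub (hgr 0)).intervalIntegrable _ _)
        ((hgr 0).intervalIntegrable _ _)]
      simp
    rw [heq]
    have := hB2.add hB1
    rw [zero_add] at this
    exact this
  -- split the moving lower endpoint
  have hsplit : (fun t : ℝ => ∫ r in (t * β)..B, g (t, r))
      = fun t => (∫ r in (0:ℝ)..B, g (t, r)) - ∫ r in (0:ℝ)..(t * β), g (t, r) := by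
    funext t
    exact (intervalIntegral.integral_interval_sub_left ((hgr t).intervalIntegrable _ _)
      ((hgr t).intervalIntegrable _ _)).symm
  rw [hsplit]
  exact hA.sub hB

/-- the degenerate affine Hecke cross relation
Q(s_a) ∘ ∂_{v̂} = ∂_{s_a v̂} ∘ Q(s_a) - (a,v̂)k_a · Id. -/
theorem stmt14 {V : Type*} [NormedAddCommGroup V] [InnerProductSpace ℝ V]
    (a : V × ℝ × ℝ) (ha : BhatV a a ≠ 0) (k : ℂ) (vhat : V × ℝ × ℝ)
    (f : V × ℝ × ℝ → ℂ) (hf : ContDiff ℝ (⊤ : ℕ∞) f) :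
    ∀ u : V × ℝ × ℝ,
      Qop a k (Dop vhat f) u
        = Dop (srefV a vhat) (Qop a k f) u - (BhatV a vhat : ℂ) * k * f u := by
  intro u
  have hAval : BhatV a ((2 / BhatV a a) • a) = 2 := by
    rw [BhatV_smul_right]; field_simp
  have s1 : ∀ w : V × ℝ × ℝ, srefV a w = w - BhatV a w • ((2 / BhatV a a) • a) := by
    intro w
    simp only [srefV]
    rw [BhatV_symm w a, smul_smul, mul_comm]
  have s2 : ∀ w : V × ℝ × ℝ, BhatV a (srefV a w) = -BhatV a w := by
    intro w; rw [s1, BhatV_sub_right, BhatV_smul_right, hAval]; ring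
  have s3 : ∀ w : V × ℝ × ℝ, srefV a (srefV a w) = w := by
    intro w; rw [s1 (srefV a w), s2, s1 w, neg_smul]; abel
  have s4 : ∀ (t : ℝ) (w : V × ℝ × ℝ),
      srefV a (u + t • w) = srefV a u + t • srefV a w := by
    intro t w
    rw [s1, s1, s1, BhatV_add_right, BhatV_smul_right, add_smul, mul_smul, smul_sub]
    abel
  have hasDop : ∀ w : V × ℝ × ℝ,
      HasDerivAt (fun t : ℝ => f (w + t • vhat)) (fderiv ℝ f w vhat) 0 := by
    intro w
    have h2 : HasDerivAt (fun t : ℝ => w + t • vhat) vhat 0 := by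
      simpa using ((hasDerivAt_id (0:ℝ)).smul_const vhat).const_add w
    have h1 : HasFDerivAt f (fderiv ℝ f w) w := (hf.differentiable (by simp) w).hasFDerivAt
    exact h1.comp_hasDerivAt_of_eq 0 h2 (by simp)
  have dop_eq : ∀ w : V × ℝ × ℝ, Dop vhat f w = fderiv ℝ f w vhat :=
    fun w => (hasDop w).deriv
  set G : ℝ × ℝ → ℂ :=
    fun p => f (u + p.1 • vhat - p.2 • ((2 / BhatV a a) • a)) with hG
  have hgsm : ContDiff ℝ (⊤ : ℕ∞) G :=
    hf.comp ((contDiff_const.add (contDiff_fst.smul contDiff_const)).sub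
      (contDiff_snd.smul contDiff_const))
  have e2 : ∀ r : ℝ, fderiv ℝ G (0, r) (1, 0)
      = fderiv ℝ f (u - r • ((2 / BhatV a a) • a)) vhat := by
    intro r
    have hfe : (fun y : ℝ => G (y, r))
        = fun t : ℝ => f ((u - r • ((2 / BhatV a a) • a)) + t • vhat) := by
      funext y; simp only [hG]; congr 1; abel
    exact (hfe ▸ hasDerivAt_g_fst G hgsm 0 r).unique (hasDop _)
  have e1 : fderiv ℝ G (0, BhatV a u) (1, 0) = fderiv ℝ f (srefV a u) vhat := by
    have hfe : (fun y : ℝ => G (y, BhatV a u))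
        = fun t : ℝ => f (srefV a u + t • vhat) := by
      funext y; simp only [hG]; rw [s1 u]; congr 1; abel
    exact (hfe ▸ hasDerivAt_g_fst G hgsm 0 (BhatV a u)).unique (hasDop _)
  have e3 : G (0, 0) = f u := by
    simp only [hG]; norm_num
  have funeq : (fun t : ℝ => Qop a k f (u + t • srefV a vhat))
      = fun t : ℝ => G (t, BhatV a u)
          - k * ∫ r in (t * BhatV a vhat)..(BhatV a u), G (t, r) := by
    funext t
    have harg : srefV a (u + t • srefV a vhat)
        = u + t • vhat - BhatV a u • ((2 / BhatV a a) • a) := by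
      rw [s4, s3, s1 u]; abel
    have hend : BhatV a (u + t • srefV a vhat) = BhatV a u - t * BhatV a vhat := by
      rw [BhatV_add_right, BhatV_smul_right, s2]; ring
    have hint : ∀ r : ℝ, u + t • srefV a vhat - r • ((2 / BhatV a a) • a)
        = u + t • vhat - (r + t * BhatV a vhat) • ((2 / BhatV a a) • a) := by
      intro r
      rw [s1 vhat, smul_sub, smul_smul, add_smul]
      abel
    simp only [Qop, harg, hend, hint, hG]
    congr 1
    rw [intervalIntegral.integral_comp_add_right
      (fun s : ℝ => f (u + t • vhat - s • ((2 / BhatV a a) • a))) (t * BhatV a vhat)]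
    norm_num
  have hQd : HasDerivAt (fun t : ℝ => G (t, BhatV a u)
        - k * ∫ r in (t * BhatV a vhat)..(BhatV a u), G (t, r))
      (fderiv ℝ G (0, BhatV a u) (1, 0)
        - k * ((∫ r in (0:ℝ)..(BhatV a u), fderiv ℝ G (0, r) (1, 0))
            - (BhatV a vhat : ℂ) * G (0, 0))) 0 :=
    (hasDerivAt_g_fst G hgsm 0 _).sub ((key_deriv G hgsm _ _).const_mul k)
  have hRHS : Dop (srefV a vhat) (Qop a k f) u
      = fderiv ℝ G (0, BhatV a u) (1, 0)
        - k * ((∫ r in (0:ℝ)..(BhatV a u), fderiv ℝ G (0, r) (1, 0))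
            - (BhatV a vhat : ℂ) * G (0, 0)) := by
    simp only [Dop]
    rw [funeq]
    exact hQd.deriv
  have hLHS : Qop a k (Dop vhat f) u
      = fderiv ℝ f (srefV a u) vhat
        - k * ∫ r in (0:ℝ)..(BhatV a u), fderiv ℝ f (u - r • ((2 / BhatV a a) • a)) vhat := by
    simp only [Qop, dop_eq]
  rw [hLHS, hRHS, e1, e3]
  have hint2 : (∫ r in (0:ℝ)..(BhatV a u), fderiv ℝ G (0, r) (1, 0))
      = ∫ r in (0:ℝ)..(BhatV a u), fderiv ℝ f (u - r • ((2 / BhatV a a) • a)) vhat := by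
    simp only [e2]
  rw [hint2]
  ring
end

section
/- Let E⁺(v̂; λ̂) = Σ_{w ∈ Ŵ^Y} e^{(wλ̂, v̂)} J_w(λ̂) (absolutely convergent). Then for any simple affine root a with (a∨, λ̂) ∉ {0, ±k_a}, the function v̂ ↦ E⁺(v̂; λ̂) is invariant under the integral-reflection operator Q(s_a) = s_a ⊗ π_M(s_a) - k_a I(a) ⊗ Id: that is, Q(s_a)E⁺(·; λ̂) = E⁺(·; λ̂). The key computation uses I(a)e^{μ̂} = (e^{μ̂} - e^{s_aμ̂})/((a∨,μ̂)) and the identity s_a = (1 - k_a/(a∨,wλ̂)) J_{s_a}(wλ̂) - k_a/(a∨,wλ̂) in the localized group algebra. -/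
/-! Termwise, the identity `s_a = (1 - k/c_w) J_{s_a}(wλ̂) - k/c_w` with `c_w = (a∨, wλ̂)`,
together with `I(a) e^μ = (e^μ - e^{s_a μ}) / (a∨, μ)`, turns `Q(s_a)` applied to the `w`-th term
of `E⁺` into its `s_a w`-th term plus a coboundary `D(s_a w) - D(w)`, where
`D(w) = (k / c_w) e^{(wλ̂, v̂)} J_w`. The coboundary sums to zero although `D` need not be
summable: `|c_w|` is invariant under `w ↦ s_a w`, and on each of its level sets the series of `D`
converges absolutely and may be reindexed. Exchanging `∫` and `∑'` is dominated convergence over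
the countable support of the summable majorant. -/

open scoped RealInnerProductSpace

open Function MeasureTheory
open scoped Interval

section Reflection

variable {V : Type*} [NormedAddCommGroup V] [InnerProductSpace ℝ V]

lemma BhatV_comm (p q : V × ℝ × ℝ) : BhatV p q = BhatV q p := by
  simp only [BhatV, real_inner_comm]
  ring

lemma BhatV_smul_left (r : ℝ) (p q : V × ℝ × ℝ) : BhatV (r • p) q = r * BhatV p q := by
  simp only [BhatV, Prod.smul_fst, Prod.smul_snd, smul_eq_mul, real_inner_smul_left]
  ring

lemma srefV_eq_sub_smul_coroot (a v : V × ℝ × ℝ) :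
    srefV a v = v - BhatV a v • ((2 / BhatV a a) • a) := by
  rw [srefV, smul_smul, BhatV_comm a v, mul_comm]

lemma srefV_coroot {a : V × ℝ × ℝ} (ha : BhatV a a ≠ 0) :
    srefV a ((2 / BhatV a a) • a) = -((2 / BhatV a a) • a) := by
  rw [srefV, BhatV_smul_left, ← sub_smul, ← neg_smul]
  congr 1
  field_simp
  ring

end Reflection

theorem tsum_comp_sub_eq_zero_of_summable_fibers {β ι E : Type*} [NormedAddCommGroup E]
    [CompleteSpace E] (e : Equiv.Perm β) (D : β → E) (p : β → ι) (hp : ∀ x, p (e x) = p x)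
    (hD : ∀ i, Summable fun x : {x // p x = i} => D x)
    (h : Summable fun x => D (e x) - D x) :
    ∑' x, (D (e x) - D x) = 0 := by
  have hfiber : ∀ i, ∑' x : {x // p x = i}, (D (e x) - D x) = 0 := by
    intro i
    let eᵢ : {x // p x = i} ≃ {x // p x = i} := e.subtypeEquiv fun x => by rw [hp]
    have hDe : Summable fun x : {x // p x = i} => D (e x) := eᵢ.summable_iff.mpr (hD i)
    rw [hDe.tsum_sub (hD i), sub_eq_zero]
    exact eᵢ.tsum_eq fun x => D x
  have hσ : Summable fun c : Σ i, {x // p x = i} =>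
      D (e (Equiv.sigmaFiberEquiv p c)) - D (Equiv.sigmaFiberEquiv p c) :=
    (Equiv.sigmaFiberEquiv p).summable_iff.mpr h
  rw [← (Equiv.sigmaFiberEquiv p).tsum_eq, hσ.tsum_sigma]
  simp only [Equiv.sigmaFiberEquiv_apply, hfiber, tsum_zero]

theorem intervalIntegral.hasSum_integral_of_summable_bound {ι E : Type*} [NormedAddCommGroup E]
    [NormedSpace ℝ E] [CompleteSpace E] {μ : Measure ℝ} [IsLocallyFiniteMeasure μ]
    {f : ι → ℝ → E} {g : ι → ℝ} {a b : ℝ}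
    (hf : ∀ i, AEStronglyMeasurable (f i) (μ.restrict (Ι a b))) (hg : Summable g)
    (hfg : ∀ i, ∀ t ∈ Ι a b, ‖f i t‖ ≤ g i) :
    HasSum (fun i => ∫ t in a..b, f i t ∂μ) (∫ t in a..b, ∑' i, f i t ∂μ) := by
  set s := support g
  have hvanish : ∀ i ∉ s, ∀ t ∈ Ι a b, f i t = 0 := fun i hi t ht =>
    norm_le_zero_iff.mp ((hfg i t ht).trans_eq (notMem_support.mp hi))
  have hsupp_int : support (fun i => ∫ t in a..b, f i t ∂μ) ⊆ s := by
    intro i hi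
    by_contra hs
    apply hi
    change ∫ t in a..b, f i t ∂μ = 0
    rw [intervalIntegral.integral_congr_ae (g := fun _ => 0)
      (ae_of_all _ fun t ht => hvanish i hs t ht), intervalIntegral.integral_zero]
  have hsum_eq : ∫ t in a..b, ∑' i, f i t ∂μ = ∫ t in a..b, ∑' i : s, f i t ∂μ :=
    intervalIntegral.integral_congr_ae <| ae_of_all _ fun t ht =>
      (tsum_subtype_eq_of_support_subset fun i hi => by_contra fun hs =>
        hi (hvanish i hs t ht)).symm
  rw [← hasSum_subtype_iff_of_support_subset hsupp_int, hsum_eq]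
  have : Countable s := hg.countable_support.to_subtype
  exact intervalIntegral.hasSum_integral_of_dominated_convergence (fun i _ => g i)
    (fun i => hf i) (fun i => ae_of_all _ (hfg i)) (ae_of_all _ fun _ _ => hg.subtype s)
    intervalIntegrable_const
    (ae_of_all _ fun t ht =>
      (Summable.of_norm_bounded (hg.subtype s) fun i => hfg i.1 t ht).hasSum)

theorem integral_cexp_sub_ofReal_mul {z c : ℂ} (hc : c ≠ 0) (b : ℝ) :
    ∫ t in (0:ℝ)..b, Complex.exp (z - t * c)
      = c⁻¹ * (Complex.exp z - Complex.exp (z - b * c)) := by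
  have hsplit : ∀ t : ℝ, Complex.exp (z - t * c) = Complex.exp z * Complex.exp (-c * t) := by
    intro t
    rw [← Complex.exp_add]
    ring_nf
  simp_rw [hsplit]
  rw [intervalIntegral.integral_const_mul, integral_exp_mul_complex (neg_ne_zero.mpr hc)]
  simp only [Complex.ofReal_zero, mul_zero, Complex.exp_zero]
  field_simp
  ring

theorem tsum_invariant_of_reflection_cocycle {G M : Type*} [Group G] [NormedAddCommGroup M]
    [NormedSpace ℂ M] [CompleteSpace M] (k : ℂ) (P : M →L[ℂ] M) (s : G) (c x y : G → ℂ)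
    (J : G → M →L[ℂ] M) (hc0 : ∀ w, c w ≠ 0) (hck : ∀ w, c w ≠ k)
    (hcs : ∀ w, c (s * w) = -c w) (hxs : ∀ w, x (s * w) = y w)
    (hJ : ∀ w, J (s * w) = ((c w - k)⁻¹ • (c w • P + k • (1 : M →L[ℂ] M))) * J w)
    (hx : Summable fun w => ‖x w • J w‖) (hy : Summable fun w => y w • J w)
    (hI : Summable fun w => ((c w)⁻¹ * (x w - y w)) • J w) :
    P * (∑' w, y w • J w) - k • ∑' w, ((c w)⁻¹ * (x w - y w)) • J w = ∑' w, x w • J w := by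
  set D : G → M →L[ℂ] M := fun w => (k * (c w)⁻¹ * x w) • J w
  have key : ∀ w, P * (y w • J w) - k • (((c w)⁻¹ * (x w - y w)) • J w)
      = x (s * w) • J (s * w) + (D (s * w) - D w) := by
    intro w
    have hcw := hc0 w
    have hckw := sub_ne_zero.mpr (hck w)
    simp only [D]
    rw [hJ, hcs, hxs, mul_smul_comm, smul_mul_assoc, add_mul, smul_mul_assoc, smul_mul_assoc,
      one_mul]
    match_scalars <;> field_simp <;> ring
  have hxs_sum : Summable fun w => x (s * w) • J (s * w) :=
    (Equiv.mulLeft s).summable_iff.mpr hx.of_norm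
  have hD : Summable fun w => D (s * w) - D w :=
    (((hy.mul_left P).sub (hI.const_smul k)).sub hxs_sum).congr fun w => by
      rw [key, add_sub_cancel_left]
  have htel : ∑' w, (D (s * w) - D w) = 0 := by
    refine tsum_comp_sub_eq_zero_of_summable_fibers (Equiv.mulLeft s) D (fun w => ‖c w‖)
      (fun w => by simp [hcs]) (fun r => ?_) hD
    refine Summable.of_norm_bounded ((hx.subtype _).mul_left (‖k‖ * r⁻¹)) fun w => ?_
    simp only [D, norm_smul, norm_mul, norm_inv, w.2, comp_apply]
    exact (mul_assoc _ _ _).le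
  calc P * (∑' w, y w • J w) - k • ∑' w, ((c w)⁻¹ * (x w - y w)) • J w
      = ∑' w, (P * (y w • J w) - k • (((c w)⁻¹ * (x w - y w)) • J w)) := by
        rw [(hy.mul_left P).tsum_sub (hI.const_smul k), hy.tsum_mul_left, hI.tsum_const_smul]
    _ = ∑' w, (x (s * w) • J (s * w) + (D (s * w) - D w)) := tsum_congr key
    _ = ∑' w, x w • J w := by
        rw [hxs_sum.tsum_add hD, htel, add_zero]
        exact (Equiv.mulLeft s).tsum_eq fun w => x w • J w

theorem stmt17_general {V G M : Type*} [NormedAddCommGroup V] [InnerProductSpace ℝ V]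
    [Group G] [NormedAddCommGroup M] [NormedSpace ℂ M] [CompleteSpace M]
    (a : V × ℝ × ℝ) (ha : BhatV a a ≠ 0)
    (k : ℂ) (πa : M →L[ℂ] M) (sa : G)
    (L : G → (V × ℝ × ℝ) →ₗ[ℝ] ℂ)
    (hL : ∀ (w : G) (v : V × ℝ × ℝ), L (sa * w) v = L w (srefV a v))
    (hreg0 : ∀ w : G, L w ((2 / BhatV a a) • a) ≠ 0)
    (hregk : ∀ w : G, L w ((2 / BhatV a a) • a) ≠ k)
    (J : G → M →L[ℂ] M)
    (hcoc : ∀ w : G, J (sa * w)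
      = ((L w ((2 / BhatV a a) • a) - k)⁻¹ •
          ((L w ((2 / BhatV a a) • a)) • πa + k • (1 : M →L[ℂ] M))) * J w)
    (hconv : ∀ v : V × ℝ × ℝ, ∃ g : G → ℝ, Summable g ∧ ∀ w : G,
      ∀ t ∈ Set.uIcc (0 : ℝ) (BhatV a v),
        ‖Complex.exp (L w (v - t • ((2 / BhatV a a) • a))) • J w‖ ≤ g w) :
    ∀ v : V × ℝ × ℝ,
      πa * (∑' w : G, Complex.exp (L w (srefV a v)) • J w)
        - k • (∫ t in (0:ℝ)..(BhatV a v),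
            ∑' w : G, Complex.exp (L w (v - t • ((2 / BhatV a a) • a))) • J w)
        = ∑' w : G, Complex.exp (L w v) • J w := by
  intro v
  obtain ⟨g, hg, hbound⟩ := hconv v
  set α := (2 / BhatV a a) • a
  have hlin : ∀ w (t : ℝ), L w (v - t • α) = L w v - t * L w α := fun w t => by
    rw [map_sub, map_smul, Complex.real_smul]
  have hterm : ∀ w, ∫ t in (0:ℝ)..BhatV a v, Complex.exp (L w (v - t • α)) • J w
      = ((L w α)⁻¹ * (Complex.exp (L w v) - Complex.exp (L w (srefV a v)))) • J w := by
    intro w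
    simp_rw [hlin]
    rw [intervalIntegral.integral_smul_const, integral_cexp_sub_ofReal_mul (hreg0 w),
      srefV_eq_sub_smul_coroot, hlin]
  have hint := intervalIntegral.hasSum_integral_of_summable_bound (μ := volume)
    (fun w => by simp_rw [hlin]; exact (by fun_prop : Continuous _).aestronglyMeasurable) hg
    (fun w t ht => hbound w t (Set.uIoc_subset_uIcc ht))
  simp only [hterm] at hint
  rw [← hint.tsum_eq]
  refine tsum_invariant_of_reflection_cocycle k πa sa (fun w => L w α) _ _ J hreg0 hregk
    (fun w => by rw [hL, srefV_coroot ha, map_neg]) (fun w => by rw [hL]) hcoc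
    (hg.of_nonneg_of_le (fun w => norm_nonneg _) fun w => by
      simpa using hbound w 0 Set.left_mem_uIcc)
    (Summable.of_norm_bounded hg fun w => ?_) hint.summable
  rw [srefV_eq_sub_smul_coroot]
  exact hbound w _ Set.right_mem_uIcc

/-- the generalized Bethe wave function E⁺(·;λ̂) is invariant under the
integral-reflection operator Q(s_a) = s_a ⊗ π_M(s_a) - k_a I(a) ⊗ Id:
π_M(s_a) E⁺(s_a v̂; λ̂) - k_a ∫₀^{(a,v̂)} E⁺(v̂ - t a∨; λ̂) dt = E⁺(v̂; λ̂). -/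
theorem stmt17 {V G M : Type*} [NormedAddCommGroup V] [InnerProductSpace ℝ V]
    [Group G] [NormedAddCommGroup M] [NormedSpace ℂ M] [CompleteSpace M]
    (a : V × ℝ × ℝ) (ha : BhatV a a ≠ 0) (haff : a.2.2 = 0)
    (k : ℂ) (πa : M →L[ℂ] M) (sa : G)
    (L : G → (V × ℝ × ℝ) →ₗ[ℝ] ℂ)
    (hL : ∀ (w : G) (v : V × ℝ × ℝ), L (sa * w) v = L w (srefV a v))
    (hreg0 : ∀ w : G, L w ((2 / BhatV a a) • a) ≠ 0)
    (hregk : ∀ w : G, L w ((2 / BhatV a a) • a) ≠ k)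
    (J : G → M →L[ℂ] M)
    (hcoc : ∀ w : G, J (sa * w)
      = ((L w ((2 / BhatV a a) • a) - k)⁻¹ •
          ((L w ((2 / BhatV a a) • a)) • πa + k • (1 : M →L[ℂ] M))) * J w)
    (hconv : ∀ v : V × ℝ × ℝ, ∃ g : G → ℝ, Summable g ∧ ∀ w : G,
      ∀ t ∈ Set.uIcc (0 : ℝ) (BhatV a v),
        ‖Complex.exp (L w (v - t • ((2 / BhatV a a) • a))) • J w‖ ≤ g w) :
    ∀ v : V × ℝ × ℝ,
      πa * (∑' w : G, Complex.exp (L w (srefV a v)) • J w)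
        - k • (∫ t in (0:ℝ)..(BhatV a v),
            ∑' w : G, Complex.exp (L w (v - t • ((2 / BhatV a a) • a))) • J w)
        = ∑' w : G, Complex.exp (L w v) • J w :=
  stmt17_general a ha k πa sa L hL hreg0 hregk J hcoc hconv
end

section
/- For the Steinberg one-dimensional representation St of Ŵ^Y (linear character w ↦ (-1)^{l(w)}), assuming (Y,P) ⊆ ℤ so that l(t_y) is even for all y ∈ Y, the generalized Bethe wave function reduces to a theta series: E_St(v̂, λ̂) = e^{uκ + ξη + (λ,v)} Σ_{y∈Y} exp(κ(v,y) - ξ(λ,y) - (ξκ/2)(y,y)) for v̂ = v + uc + ξd with ξ > 0 and λ̂ = λ + ηc + κd with Re(κ) > 0, and the series converges absolutely. -/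
open scoped RealInnerProductSpace

/-- The lattice point y = Σᵢ mᵢ bᵢ of the full lattice Y spanned by the basis b. -/
noncomputable def latVec {V : Type*} [NormedAddCommGroup V] [InnerProductSpace ℝ V]
    {n : ℕ} (b : Module.Basis (Fin n) ℝ V) (m : Fin n → ℤ) : V :=
  ∑ i, (m i : ℝ) • b i

/-!
Every root is a weight, so `(y, α) ∈ ℤ` and `|(y, α)| ≡ (y, α) mod 2`; hence
`l(t_y) ≡ (y, 2ρ) mod 2` with `2ρ = Σ_{α ∈ R⁺} α`. The Weyl vector `ρ` is itself a weight: for a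
positive root `β`, `a ↦ ±s_β a` is an involution of `R⁺` that preserves `⟨a, β^∨⟩ mod 2`, and its
fixed points have `⟨a, β^∨⟩` even (an odd value would force `β = ±2a`, which reducedness forbids).
So `(Y, P) ⊆ ℤ` makes `(y, ρ)` an integer, every `l(t_y)` is even, and all signs in `E_St` are `1`.
Absolute convergence holds because `Re(ξκ/2) > 0`: the Gaussian factor dominates the summand by
`C · exp(-Σ |m_i|)`.
-/

theorem Finset.even_sum_abs_iff {ι : Type*} (s : Finset ι) (f : ι → ℤ) :
    Even (∑ i ∈ s, |f i|) ↔ Even (∑ i ∈ s, f i) := by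
  rw [← Int.even_sub, ← Finset.sum_sub_distrib]
  refine Finset.even_sum _ fun i _ => ?_
  rcases abs_choice (f i) with h | h <;> rw [h]
  · simp
  · exact ⟨-f i, by ring⟩

section RootSystem

variable {V : Type*} [NormedAddCommGroup V] [InnerProductSpace ℝ V]

/-- `⟨x, β^∨⟩` -/
noncomputable def pairCoroot (x β : V) : ℝ := 2 * ⟪x, β⟫ / ⟪β, β⟫

noncomputable def reflect (β x : V) : V := x - pairCoroot x β • β

open scoped Classical in
noncomputable def positiveRep (Rplus : Finset V) (x : V) : V := if x ∈ Rplus then x else -x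

theorem pairCoroot_neg_left (x β : V) : pairCoroot (-x) β = -pairCoroot x β := by
  simp only [pairCoroot, inner_neg_left]; ring

theorem pairCoroot_neg_right (x β : V) : pairCoroot x (-β) = -pairCoroot x β := by
  simp only [pairCoroot, inner_neg_right, inner_neg_left, neg_neg]; ring

theorem pairCoroot_sum_left {ι : Type*} (s : Finset ι) (x : ι → V) (β : V) :
    pairCoroot (∑ i ∈ s, x i) β = ∑ i ∈ s, pairCoroot (x i) β := by
  simp only [pairCoroot, sum_inner, Finset.mul_sum, Finset.sum_div]

theorem pairCoroot_smul_left (t : ℝ) (x β : V) : pairCoroot (t • x) β = t * pairCoroot x β := by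
  simp only [pairCoroot, real_inner_smul_left]; ring

theorem pairCoroot_self {β : V} (hβ : β ≠ 0) : pairCoroot β β = 2 := by
  have : ⟪β, β⟫ ≠ 0 := inner_self_ne_zero.mpr hβ
  simp only [pairCoroot]; field_simp

theorem pairCoroot_reflect {β : V} (hβ : β ≠ 0) (x : V) :
    pairCoroot (reflect β x) β = -pairCoroot x β := by
  have : ⟪β, β⟫ ≠ 0 := inner_self_ne_zero.mpr hβ
  simp only [reflect, pairCoroot, inner_sub_left, real_inner_smul_left]
  field_simp; ring

theorem reflect_reflect {β : V} (hβ : β ≠ 0) (x : V) : reflect β (reflect β x) = x := by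
  rw [reflect, pairCoroot_reflect hβ, reflect, neg_smul, sub_neg_eq_add, sub_add_cancel]

theorem reflect_neg (β x : V) : reflect β (-x) = -reflect β x := by
  rw [reflect, reflect, pairCoroot_neg_left, neg_smul, neg_sub, sub_neg_eq_add, neg_add_eq_sub]

theorem reflect_eq_self_iff {β : V} (hβ : β ≠ 0) (x : V) :
    reflect β x = x ↔ pairCoroot x β = 0 := by
  rw [reflect, sub_eq_self, smul_eq_zero, or_iff_left hβ]

theorem eq_smul_of_reflect_eq_neg {β x : V} (h : reflect β x = -x) :
    x = (pairCoroot x β / 2) • β := by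
  have h2 : (2 : ℝ) • x = pairCoroot x β • β := by
    rw [reflect, sub_eq_iff_eq_add] at h
    rw [two_smul]; nth_rewrite 1 [h]; abel
  rw [div_eq_inv_mul, mul_smul, ← h2, smul_smul, inv_mul_cancel₀ two_ne_zero, one_smul]

theorem pairCoroot_smul_right (t : ℝ) (x β : V) : pairCoroot x (t • β) = pairCoroot x β / t := by
  rcases eq_or_ne t 0 with rfl | ht
  · simp [pairCoroot]
  · simp only [pairCoroot, real_inner_smul_left, real_inner_smul_right]
    field_simp

theorem pairCoroot_positiveRep (Rplus : Finset V) (x β : V) :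
    pairCoroot (positiveRep Rplus x) β = pairCoroot x β ∨
      pairCoroot (positiveRep Rplus x) β = -pairCoroot x β := by
  unfold positiveRep
  split_ifs
  · exact .inl rfl
  · exact .inr (pairCoroot_neg_left x β)

/-- `R` is a reduced crystallographic root system and `R = R⁺ ⊔ -R⁺`. -/
structure IsPositiveRootSystem (R Rplus : Finset V) : Prop where
  mem_iff : ∀ α, α ∈ R ↔ α ∈ Rplus ∨ -α ∈ Rplus
  neg_notMem : ∀ α ∈ Rplus, -α ∉ Rplus
  zero_notMem : (0 : V) ∉ R
  reflect_mem : ∀ α ∈ R, ∀ β ∈ R, reflect α β ∈ R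
  two_smul_notMem : ∀ α ∈ R, (2 : ℝ) • α ∉ R
  pairCoroot_int : ∀ α ∈ R, ∀ β ∈ R, ∃ z : ℤ, pairCoroot α β = z

namespace IsPositiveRootSystem

variable {R Rplus : Finset V}

theorem mem_of_mem_pos (h : IsPositiveRootSystem R Rplus) {α : V} (hα : α ∈ Rplus) : α ∈ R :=
  (h.mem_iff α).2 (.inl hα)

theorem neg_mem (h : IsPositiveRootSystem R Rplus) {α : V} (hα : α ∈ R) : -α ∈ R := by
  rw [h.mem_iff, neg_neg, or_comm, ← h.mem_iff]
  exact hα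

theorem ne_zero (h : IsPositiveRootSystem R Rplus) {α : V} (hα : α ∈ R) : α ≠ 0 :=
  fun h0 => h.zero_notMem (h0 ▸ hα)

theorem positiveRep_mem (h : IsPositiveRootSystem R Rplus) {x : V} (hx : x ∈ R) :
    positiveRep Rplus x ∈ Rplus := by
  unfold positiveRep
  split_ifs with hpos
  · exact hpos
  · exact ((h.mem_iff x).1 hx).resolve_left hpos

theorem positiveRep_reflect_positiveRep_reflect (h : IsPositiveRootSystem R Rplus) {a β : V}
    (ha : a ∈ Rplus) (hβ : β ≠ 0) :
    positiveRep Rplus (reflect β (positiveRep Rplus (reflect β a))) = a := by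
  by_cases hs : reflect β a ∈ Rplus
  · rw [show positiveRep Rplus (reflect β a) = reflect β a from if_pos hs, reflect_reflect hβ]
    exact if_pos ha
  · rw [show positiveRep Rplus (reflect β a) = -reflect β a from if_neg hs, reflect_neg,
      reflect_reflect hβ]
    exact (if_neg (h.neg_notMem a ha)).trans (neg_neg a)

theorem cast_round_pairCoroot (h : IsPositiveRootSystem R Rplus) {α β : V} (hα : α ∈ R)
    (hβ : β ∈ R) : (round (pairCoroot α β) : ℝ) = pairCoroot α β := by
  obtain ⟨z, hz⟩ := h.pairCoroot_int α hα β hβ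
  rw [hz, round_intCast]

theorem even_round_pairCoroot_of_reflect_eq_neg (h : IsPositiveRootSystem R Rplus) {a β : V}
    (ha : a ∈ R) (hβ : β ∈ R) (hrefl : reflect β a = -a) : Even (round (pairCoroot a β)) := by
  set z := round (pairCoroot a β)
  have hz : (z : ℝ) = pairCoroot a β := h.cast_round_pairCoroot ha hβ
  have ha_eq : a = ((z : ℝ) / 2) • β := hz ▸ eq_smul_of_reflect_eq_neg hrefl
  have hz0 : (z : ℝ) ≠ 0 := by
    rintro hz0
    rw [hz0, zero_div, zero_smul] at ha_eq
    exact h.ne_zero ha ha_eq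
  obtain ⟨w, hw⟩ := h.pairCoroot_int β hβ a ha
  have hzw : z * w = 4 := by
    have : (z : ℝ) * w = 4 := by
      rw [← hw, ha_eq, pairCoroot_smul_right, pairCoroot_self (h.ne_zero hβ)]
      field_simp
      norm_num
    exact_mod_cast this
  by_contra hodd
  have hz_unit : z = 1 ∨ z = -1 := by
    have hle : z ≤ 4 := Int.le_of_dvd (by norm_num) ⟨w, hzw.symm⟩
    have hge : -4 ≤ z := by
      linarith [Int.le_of_dvd (b := 4) (by norm_num) ⟨-w, by rw [neg_mul_neg, hzw]⟩]
    clear_value z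
    interval_cases z <;> first | omega | exact absurd (by decide) hodd
  apply h.two_smul_notMem a ha
  rcases hz_unit with h1 | h1 <;> rw [ha_eq, h1, smul_smul] <;> norm_num
  · exact hβ
  · exact h.neg_mem hβ

theorem exists_pairCoroot_sum_eq_two_mul (h : IsPositiveRootSystem R Rplus) {β : V}
    (hβ : β ∈ Rplus) : ∃ k : ℤ, pairCoroot (∑ a ∈ Rplus, a) β = 2 * k := by
  have hβR := h.mem_of_mem_pos hβ
  set c : V → ℤ := fun a => round (pairCoroot a β)
  have hc : ∀ a ∈ R, (c a : ℝ) = pairCoroot a β := fun a ha => h.cast_round_pairCoroot ha hβR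
  set Φ : V → V := fun a => positiveRep Rplus (reflect β a)
  have hΦ_mem : ∀ a ∈ Rplus, Φ a ∈ Rplus := fun a ha =>
    h.positiveRep_mem (h.reflect_mem β hβR a (h.mem_of_mem_pos ha))
  have hcΦ : ∀ a ∈ Rplus, (c (Φ a) : ZMod 2) = c a := by
    intro a ha
    have hc' : (c (Φ a) : ℝ) = -c a ∨ (c (Φ a) : ℝ) = c a := by
      have hr := pairCoroot_reflect (h.ne_zero hβR) a
      rw [hc _ (h.mem_of_mem_pos (hΦ_mem a ha)), hc a (h.mem_of_mem_pos ha)]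
      rcases pairCoroot_positiveRep Rplus (reflect β a) β with h1 | h1
      · exact .inl (h1.trans hr)
      · exact .inr (by rw [h1, hr, neg_neg])
    rcases hc' with h' | h' <;> norm_cast at h' <;> rw [h']
    push_cast
    exact ZMod.neg_eq_self_mod_two _
  have hfixed : ∀ a ∈ Rplus, (c a : ZMod 2) ≠ 0 → Φ a ≠ a := by
    intro a ha hodd hΦa
    apply hodd
    rw [ZMod.intCast_eq_zero_iff_even]
    by_cases hs : reflect β a ∈ Rplus
    · rw [show Φ a = reflect β a from if_pos hs, reflect_eq_self_iff (h.ne_zero hβR)] at hΦa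
      simp [c, hΦa]
    · rw [show Φ a = -reflect β a from if_neg hs, neg_eq_iff_eq_neg] at hΦa
      exact h.even_round_pairCoroot_of_reflect_eq_neg (h.mem_of_mem_pos ha) hβR hΦa
  have hsum : ∑ a ∈ Rplus, (c a : ZMod 2) = 0 :=
    Finset.sum_involution (fun a _ => Φ a)
      (fun a ha => by rw [hcΦ a ha, CharTwo.add_self_eq_zero]) hfixed hΦ_mem
      (fun a ha => h.positiveRep_reflect_positiveRep_reflect ha (h.ne_zero hβR))
  obtain ⟨k, hk⟩ : Even (∑ a ∈ Rplus, c a) := by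
    rw [← ZMod.intCast_eq_zero_iff_even]; push_cast; exact hsum
  refine ⟨k, ?_⟩
  rw [pairCoroot_sum_left, ← Finset.sum_congr rfl fun a ha => hc a (h.mem_of_mem_pos ha)]
  exact_mod_cast hk.trans (two_mul k).symm

theorem exists_pairCoroot_halfSum_eq_int (h : IsPositiveRootSystem R Rplus) {β : V}
    (hβ : β ∈ R) : ∃ z : ℤ, pairCoroot ((2 : ℝ)⁻¹ • ∑ a ∈ Rplus, a) β = z := by
  rw [pairCoroot_smul_left]
  rcases (h.mem_iff β).1 hβ with hpos | hneg
  · obtain ⟨k, hk⟩ := h.exists_pairCoroot_sum_eq_two_mul hpos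
    exact ⟨k, by rw [hk]; ring⟩
  · obtain ⟨k, hk⟩ := h.exists_pairCoroot_sum_eq_two_mul hneg
    rw [pairCoroot_neg_right] at hk
    exact ⟨-k, by push_cast; linarith⟩

theorem exists_sum_abs_inner_eq_two_mul (h : IsPositiveRootSystem R Rplus) (y : V)
    (hy : ∀ p : V, (∀ α ∈ R, ∃ z : ℤ, pairCoroot p α = z) → ∃ z : ℤ, ⟪y, p⟫ = z) :
    ∃ k : ℤ, ∑ α ∈ Rplus, |⟪y, α⟫| = 2 * k := by
  set w : V → ℤ := fun α => round ⟪y, α⟫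
  have hw : ∀ α ∈ Rplus, (w α : ℝ) = ⟪y, α⟫ := fun α hα => by
    obtain ⟨z, hz⟩ := hy α (h.pairCoroot_int α (h.mem_of_mem_pos hα))
    simp only [w, hz, round_intCast]
  obtain ⟨z, hz⟩ := hy _ fun β hβ => h.exists_pairCoroot_halfSum_eq_int hβ
  have hsum : ∑ α ∈ Rplus, w α = 2 * z := by
    rw [real_inner_smul_right, inner_sum, ← Finset.sum_congr rfl hw] at hz
    have : ((∑ α ∈ Rplus, w α : ℤ) : ℝ) = 2 * z := by push_cast; linarith
    exact_mod_cast this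
  obtain ⟨k, hk⟩ := (Finset.even_sum_abs_iff Rplus w).2 ⟨z, by rw [hsum, two_mul]⟩
  refine ⟨k, ?_⟩
  rw [← Finset.sum_congr rfl fun α hα => congrArg abs (hw α hα)]
  exact_mod_cast hk.trans (two_mul k).symm

end IsPositiveRootSystem

end RootSystem

theorem Summable.fin_pi_prod {α : Type*} {f : α → ℝ} (hf : Summable f) (hf0 : 0 ≤ f) (n : ℕ) :
    Summable fun x : Fin n → α => ∏ i, f (x i) := by
  induction n with
  | zero => exact Summable.of_finite
  | succ n ih =>
    refine (Fin.consEquiv fun _ => α).summable_iff.mp ?_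
    refine (hf.mul_of_nonneg ih hf0 fun x => Finset.prod_nonneg fun i _ => hf0 _).congr fun p => ?_
    simp [Fin.prod_univ_succ]

theorem summable_exp_neg_sum_abs (n : ℕ) :
    Summable fun m : Fin n → ℤ => Real.exp (-∑ i, |(m i : ℝ)|) := by
  have h1 : Summable fun k : ℤ => Real.exp (-|(k : ℝ)|) :=
    .of_nat_of_neg (by simpa using Real.summable_exp_neg_nat)
      (by simpa using Real.summable_exp_neg_nat)
  simpa [← Finset.sum_neg_distrib, Real.exp_sum] using
    h1.fin_pi_prod (fun _ => (Real.exp_pos _).le) n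

theorem mul_sub_mul_sq_le {c : ℝ} (hc : 0 < c) (M t : ℝ) : M * t - c * t ^ 2 ≤ M ^ 2 / (4 * c) := by
  rw [le_div_iff₀ (by positivity)]
  nlinarith [sq_nonneg (2 * c * t - M)]

section Lattice

variable {V : Type*} [NormedAddCommGroup V] [InnerProductSpace ℝ V] {n : ℕ}

theorem exists_sum_abs_le_norm_latVec (b : Module.Basis (Fin n) ℝ V) :
    ∃ K : ℝ, ∀ m : Fin n → ℤ, ∑ i, |(m i : ℝ)| ≤ K * ‖latVec b m‖ := by
  have := Module.Finite.of_basis b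
  let e : V →L[ℝ] (Fin n → ℝ) := b.equivFun.toContinuousLinearEquiv
  refine ⟨n * ‖e‖, fun m => ?_⟩
  have he : e (latVec b m) = fun i => (m i : ℝ) := by
    rw [show latVec b m = b.equivFun.symm fun i => (m i : ℝ) from (b.equivFun_symm_apply _).symm]
    exact b.equivFun.apply_symm_apply _
  calc ∑ i, |(m i : ℝ)| ≤ ∑ _i : Fin n, ‖e (latVec b m)‖ :=
        Finset.sum_le_sum fun i _ => by simpa [he] using norm_le_pi_norm (e (latVec b m)) i
    _ = n * ‖e (latVec b m)‖ := by simp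
    _ ≤ n * (‖e‖ * ‖latVec b m‖) := by gcongr; exact e.le_opNorm _
    _ = n * ‖e‖ * ‖latVec b m‖ := by ring

theorem summable_norm_cexp_sub_mul_inner_self (b : Module.Basis (Fin n) ℝ V) (φ : V →ₗ[ℝ] ℂ)
    {q : ℂ} (hq : 0 < q.re) :
    Summable fun m : Fin n → ℤ =>
      ‖Complex.exp (φ (latVec b m) - q * ((⟪latVec b m, latVec b m⟫ : ℝ) : ℂ))‖ := by
  have := Module.Finite.of_basis b
  obtain ⟨K, hK⟩ := exists_sum_abs_le_norm_latVec b
  set C := ‖LinearMap.toContinuousLinearMap φ‖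
  refine ((summable_exp_neg_sum_abs n).mul_left (Real.exp ((C + K) ^ 2 / (4 * q.re))))
    |>.of_nonneg_of_le (fun _ => norm_nonneg _) fun m => ?_
  set y := latVec b m
  have hφ : (φ y).re ≤ C * ‖y‖ :=
    (Complex.re_le_norm _).trans ((LinearMap.toContinuousLinearMap φ).le_opNorm y)
  have hre : (φ y - q * ((⟪y, y⟫ : ℝ) : ℂ)).re = (φ y).re - q.re * ‖y‖ ^ 2 := by
    rw [real_inner_self_eq_norm_sq, Complex.sub_re, Complex.re_mul_ofReal]
  rw [Complex.norm_exp, ← Real.exp_add, Real.exp_le_exp, hre]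
  linarith [mul_sub_mul_sq_le hq (C + K) ‖y‖, hK m]

end Lattice

theorem stmt19_general {V : Type*} [NormedAddCommGroup V] [InnerProductSpace ℝ V]
    {n : ℕ} (b : Module.Basis (Fin n) ℝ V)
    (R Rplus : Finset V)
    (hR : ∀ α : V, α ∈ R ↔ (α ∈ Rplus ∨ -α ∈ Rplus))
    (hdisj : ∀ α ∈ Rplus, -α ∉ Rplus)
    (h0 : (0 : V) ∉ R)
    (hrefl : ∀ α ∈ R, ∀ β ∈ R, β - ((2 * ⟪β, α⟫ / ⟪α, α⟫) • α) ∈ R)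
    (hred : ∀ α ∈ R, (2 : ℝ) • α ∉ R)
    (hcrys : ∀ α ∈ R, ∀ β ∈ R, ∃ z : ℤ, 2 * ⟪α, β⟫ / ⟪β, β⟫ = (z : ℝ))
    -- the length function l(t_y):
    (l : (Fin n → ℤ) → ℕ)
    (hl : ∀ m : Fin n → ℤ, (l m : ℝ) = ∑ α ∈ Rplus, |⟪latVec b m, α⟫|)
    -- (Y, P) ⊆ ℤ: every lattice point pairs integrally with every weight:
    (hP : ∀ m : Fin n → ℤ, ∀ p : V,
      (∀ α ∈ R, ∃ z : ℤ, 2 * ⟪p, α⟫ / ⟪α, α⟫ = (z : ℝ)) →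
      ∃ z : ℤ, ⟪latVec b m, p⟫ = (z : ℝ))
    (Λ : V →ₗ[ℝ] ℂ)
    (v : V) (u ξ : ℝ) (hξ : 0 < ξ) (η κ : ℂ) (hκ : 0 < κ.re) :
    Summable (fun m : Fin n → ℤ =>
      ‖((-1 : ℂ) ^ (l m)) * Complex.exp ((u : ℂ) * κ + (ξ : ℂ) * η + Λ v
          + κ * ((⟪v, latVec b m⟫ : ℝ) : ℂ) - (ξ : ℂ) * Λ (latVec b m)
          - ((ξ : ℂ) * κ / 2) * ((⟪latVec b m, latVec b m⟫ : ℝ) : ℂ))‖) ∧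
    (∑' m : Fin n → ℤ,
        ((-1 : ℂ) ^ (l m)) * Complex.exp ((u : ℂ) * κ + (ξ : ℂ) * η + Λ v
          + κ * ((⟪v, latVec b m⟫ : ℝ) : ℂ) - (ξ : ℂ) * Λ (latVec b m)
          - ((ξ : ℂ) * κ / 2) * ((⟪latVec b m, latVec b m⟫ : ℝ) : ℂ)))
      = Complex.exp ((u : ℂ) * κ + (ξ : ℂ) * η + Λ v)
        * ∑' m : Fin n → ℤ,
            Complex.exp (κ * ((⟪v, latVec b m⟫ : ℝ) : ℂ) - (ξ : ℂ) * Λ (latVec b m)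
              - ((ξ : ℂ) * κ / 2) * ((⟪latVec b m, latVec b m⟫ : ℝ) : ℂ)) := by
  have hRS : IsPositiveRootSystem R Rplus := ⟨hR, hdisj, h0, hrefl, hred, hcrys⟩
  have hsign : ∀ m, (-1 : ℂ) ^ l m = 1 := fun m => by
    obtain ⟨k, hk⟩ := hRS.exists_sum_abs_inner_eq_two_mul (latVec b m) (hP m)
    have hlk : (l m : ℤ) = 2 * k := by exact_mod_cast (hl m).trans hk
    exact ((Int.even_coe_nat _).1 ⟨k, by omega⟩).neg_one_pow
  set A : ℂ := (u : ℂ) * κ + (ξ : ℂ) * η + Λ v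
  set φ : V →ₗ[ℝ] ℂ := κ • (Complex.ofRealCLM : ℝ →ₗ[ℝ] ℂ) ∘ₗ innerₛₗ ℝ v - (ξ : ℂ) • Λ
  have hφ : ∀ y, φ y = κ * ((⟪v, y⟫ : ℝ) : ℂ) - (ξ : ℂ) * Λ y := fun y => by simp [φ]
  have hsplit : ∀ m, (-1 : ℂ) ^ l m * Complex.exp (A
      + κ * ((⟪v, latVec b m⟫ : ℝ) : ℂ) - (ξ : ℂ) * Λ (latVec b m)
      - ((ξ : ℂ) * κ / 2) * ((⟪latVec b m, latVec b m⟫ : ℝ) : ℂ)) =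
      Complex.exp A * Complex.exp (φ (latVec b m)
        - ((ξ : ℂ) * κ / 2) * ((⟪latVec b m, latVec b m⟫ : ℝ) : ℂ)) := fun m => by
    rw [hsign, one_mul, ← Complex.exp_add, hφ]
    congr 1
    ring
  have hq : 0 < ((ξ : ℂ) * κ / 2).re := by simpa using mul_pos hξ hκ
  simp only [hsplit, norm_mul]
  refine ⟨(summable_norm_cexp_sub_mul_inner_self b φ hq).mul_left _, ?_⟩
  simp only [hφ]
  exact tsum_mul_left

/-- for the Steinberg character w ↦ (-1)^{l(w)} of Ŵ^Y, assuming
(Y,P) ⊆ ℤ (so that l(t_y) is even for all y ∈ Y), the generalized Bethe wave function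
E_St(v̂,λ̂) = Σ_{y∈Y} (-1)^{l(t_y)} e^{(t_yλ̂,v̂)} converges absolutely and reduces to the
theta series e^{uκ+ξη+(λ,v)} Σ_{y∈Y} exp(κ(v,y) - ξ(λ,y) - (ξκ/2)(y,y)), where
v̂ = v + uc + ξd with ξ > 0 and λ̂ = λ + ηc + κd with Re(κ) > 0, and
e^{(t_yλ̂,v̂)} = exp(uκ + ξη + (λ,v) + κ(v,y) - ξ(λ,y) - (ξκ/2)(y,y)).
R is a finite reduced crystallographic root system closed under its reflections, with
positive system R⁺ cut out by a generic functional, l(t_y) = Σ_{α∈R⁺}|(y,α)|, and λ is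
encoded by the ℝ-linear functional Λ = (λ,·) : V → ℂ. -/
theorem stmt19 {V : Type*} [NormedAddCommGroup V] [InnerProductSpace ℝ V]
    {n : ℕ} (b : Module.Basis (Fin n) ℝ V)
    (R Rplus : Finset V)
    (hR : ∀ α : V, α ∈ R ↔ (α ∈ Rplus ∨ -α ∈ Rplus))
    (hdisj : ∀ α ∈ Rplus, -α ∉ Rplus)
    (h0 : (0 : V) ∉ R)
    (hrefl : ∀ α ∈ R, ∀ β ∈ R, β - ((2 * ⟪β, α⟫ / ⟪α, α⟫) • α) ∈ R)
    (hred : ∀ α ∈ R, (2 : ℝ) • α ∉ R)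
    (hcrys : ∀ α ∈ R, ∀ β ∈ R, ∃ z : ℤ, 2 * ⟪α, β⟫ / ⟪β, β⟫ = (z : ℝ))
    (f : V) (hf : ∀ α ∈ R, (α ∈ Rplus ↔ 0 < ⟪f, α⟫))
    -- the length function l(t_y):
    (l : (Fin n → ℤ) → ℕ)
    (hl : ∀ m : Fin n → ℤ, (l m : ℝ) = ∑ α ∈ Rplus, |⟪latVec b m, α⟫|)
    -- (Y, P) ⊆ ℤ: every lattice point pairs integrally with every weight:
    (hP : ∀ m : Fin n → ℤ, ∀ p : V,
      (∀ α ∈ R, ∃ z : ℤ, 2 * ⟪p, α⟫ / ⟪α, α⟫ = (z : ℝ)) →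
      ∃ z : ℤ, ⟪latVec b m, p⟫ = (z : ℝ))
    (Λ : V →ₗ[ℝ] ℂ)
    (v : V) (u ξ : ℝ) (hξ : 0 < ξ) (η κ : ℂ) (hκ : 0 < κ.re) :
    Summable (fun m : Fin n → ℤ =>
      ‖((-1 : ℂ) ^ (l m)) * Complex.exp ((u : ℂ) * κ + (ξ : ℂ) * η + Λ v
          + κ * ((⟪v, latVec b m⟫ : ℝ) : ℂ) - (ξ : ℂ) * Λ (latVec b m)
          - ((ξ : ℂ) * κ / 2) * ((⟪latVec b m, latVec b m⟫ : ℝ) : ℂ))‖) ∧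
    (∑' m : Fin n → ℤ,
        ((-1 : ℂ) ^ (l m)) * Complex.exp ((u : ℂ) * κ + (ξ : ℂ) * η + Λ v
          + κ * ((⟪v, latVec b m⟫ : ℝ) : ℂ) - (ξ : ℂ) * Λ (latVec b m)
          - ((ξ : ℂ) * κ / 2) * ((⟪latVec b m, latVec b m⟫ : ℝ) : ℂ)))
      = Complex.exp ((u : ℂ) * κ + (ξ : ℂ) * η + Λ v)
        * ∑' m : Fin n → ℤ,
            Complex.exp (κ * ((⟪v, latVec b m⟫ : ℝ) : ℂ) - (ξ : ℂ) * Λ (latVec b m)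
              - ((ξ : ℂ) * κ / 2) * ((⟪latVec b m, latVec b m⟫ : ℝ) : ℂ)) :=
  stmt19_general b R Rplus hR hdisj h0 hrefl hred hcrys l hl hP Λ v u ξ hξ η κ hκ
end
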